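/- Each Aharonov coefficient φ_n(f; z) with n ≥ 1 is Möbius invariant: for every Möbius transformation τ(w) = (aw+b)/(cw+d), ad−bc ≠ 0, one has φ_n(τ∘f; z) = φ_n(f; z). -/

import Mathlib

open Complex Set Metric

open Filter FormalMultilinearSeries

open scoped Topology

/-!
For `τ w = (a w + b)/(c w + d)` one has `τ p - τ q = (a d - b c)(p - q) / ((c p + d)(c q + d))` and
`(τ ∘ f)'(z) = (a d - b c) f'(z) / (c f(z) + d)²`, so the kernel `f'(z)/(f(w) - f(z))` of `τ ∘ f`
differs from that of `f` by the constant `c f'(z)/(c f(z) + d)`. This changes only the coefficient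
of `(w - z)⁰`, since a power series that is constant on a punctured disc has vanishing
coefficients in positive degree.
-/

section PowerSeries

variable {𝕜 : Type*} [NontriviallyNormedField 𝕜] [CompleteSpace 𝕜]

theorem coeff_eq_zero_of_hasSum_eq_const {c : ℕ → 𝕜} {K : 𝕜} {r : ℝ} (hr : 0 < r)
    (h : ∀ y : 𝕜, y ≠ 0 → ‖y‖ < r → HasSum (fun n => c n * y ^ n) K) {n : ℕ} (hn : n ≠ 0) :
    c n = 0 := by
  set p := ofScalars 𝕜 c
  have hp_apply (y : 𝕜) : (fun n => p n fun _ => y) = fun n => c n * y ^ n := by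
    simp only [p, ofScalars_apply_eq', smul_eq_mul]
  obtain ⟨y₀, hy₀, hy₀r⟩ := NormedField.exists_norm_lt 𝕜 hr
  have hrad : 0 < p.radius := by
    refine lt_of_lt_of_le (by simpa using hy₀) (p.le_radius_of_tendsto (r := ‖y₀‖₊) (l := 0) ?_)
    have := (h y₀ (norm_pos_iff.mp hy₀) hy₀r).summable.tendsto_atTop_zero.norm
    simpa only [p, ofScalars_norm, coe_nnnorm, norm_mul, norm_pow, norm_zero] using this
  have hps : HasFPowerSeriesAt p.sum p 0 := (p.hasFPowerSeriesOnBall hrad).hasFPowerSeriesAt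
  have h_punctured : ∀ᶠ y in 𝓝[≠] (0 : 𝕜), p.sum y = K := by
    filter_upwards [self_mem_nhdsWithin, nhdsWithin_le_nhds (ball_mem_nhds 0 hr)] with y hy hyr
    rw [mem_ball_zero_iff] at hyr
    exact (hp_apply y ▸ h y hy hyr).tsum_eq
  have h_near : ∀ᶠ y in 𝓝 (0 : 𝕜), p.sum y = K :=
    (hps.analyticAt.frequently_eq_iff_eventually_eq analyticAt_const).mp h_punctured.frequently
  have hp_const : p = constFormalMultilinearSeries 𝕜 𝕜 K :=
    hps.eq_formalMultilinearSeries_of_eventually hasFPowerSeriesAt_const h_near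
  have := congrArg (· n) hp_const
  simpa [p, constFormalMultilinearSeries_apply_of_nonzero hn, ofScalars_eq_zero] using this

end PowerSeries

section Moebius

theorem moebius_sub_moebius {K : Type*} [Field K] (a b c d : K) {p q : K} (hp : c * p + d ≠ 0)
    (hq : c * q + d ≠ 0) :
    (a * p + b) / (c * p + d) - (a * q + b) / (c * q + d) =
      (a * d - b * c) * (p - q) / ((c * p + d) * (c * q + d)) := by
  rw [div_sub_div _ _ hp hq]
  ring

variable {𝕜 : Type*} [NontriviallyNormedField 𝕜]

theorem HasDerivAt.moebius_comp {f : 𝕜 → 𝕜} {f' z : 𝕜} (hf : HasDerivAt f f' z) (a b c d : 𝕜)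
    (hz : c * f z + d ≠ 0) :
    HasDerivAt (fun u => (a * f u + b) / (c * f u + d)) ((a * d - b * c) * f' / (c * f z + d) ^ 2)
      z := by
  refine (((hf.const_mul a).add_const b).fun_div ((hf.const_mul c).add_const d) hz).congr_deriv ?_
  ring

theorem deriv_div_sub_moebius_comp {f : 𝕜 → 𝕜} {z w : 𝕜} (hf : DifferentiableAt 𝕜 f z)
    {a b c d : 𝕜} (had : a * d - b * c ≠ 0) (hfw : f w ≠ f z) (hw : c * f w + d ≠ 0)
    (hz : c * f z + d ≠ 0) :
    deriv (fun u => (a * f u + b) / (c * f u + d)) z /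
        ((a * f w + b) / (c * f w + d) - (a * f z + b) / (c * f z + d)) -
      deriv f z / (f w - f z) = c * deriv f z / (c * f z + d) := by
  have hfw' : f w - f z ≠ 0 := sub_ne_zero.mpr hfw
  rw [(hf.hasDerivAt.moebius_comp a b c d hz).deriv, moebius_sub_moebius a b c d hw hz]
  field_simp
  ring

end Moebius

theorem aharonov_moebius_invariant_general (f : ℂ → ℂ) (z : ℂ) (r : ℝ) (hr : 0 < r)
    (a b c d : ℂ) (had : a * d - b * c ≠ 0)
    (φ ψ : ℕ → ℂ)
    (hdiff : DifferentiableOn ℂ f (ball z r))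
    (hne : ∀ w ∈ ball z r, w ≠ z → f w ≠ f z)
    (hpole : ∀ w ∈ ball z r, c * f w + d ≠ 0)
    (hφ : ∀ w ∈ ball z r, w ≠ z →
      HasSum (fun n : ℕ => φ n * (w - z) ^ n)
        (deriv f z / (f w - f z) - 1 / (w - z)))
    (hψ : ∀ w ∈ ball z r, w ≠ z →
      HasSum (fun n : ℕ => ψ n * (w - z) ^ n)
        (deriv (fun u => (a * f u + b) / (c * f u + d)) z /
            ((a * f w + b) / (c * f w + d) - (a * f z + b) / (c * f z + d)) -
          1 / (w - z))) :
    ∀ n : ℕ, 1 ≤ n → ψ n = φ n := by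
  have hz : z ∈ ball z r := mem_ball_self hr
  have hfz : DifferentiableAt ℂ f z := hdiff.differentiableAt (isOpen_ball.mem_nhds hz)
  intro n hn
  rw [← sub_eq_zero]
  refine coeff_eq_zero_of_hasSum_eq_const (c := fun n => ψ n - φ n)
    (K := c * deriv f z / (c * f z + d)) hr (fun y hy hyr => ?_) (Nat.one_le_iff_ne_zero.mp hn)
  have hw : z + y ∈ ball z r := by simpa [mem_ball, dist_eq_norm] using hyr
  have hwz : z + y ≠ z := by simpa using hy
  have hsub := (hψ _ hw hwz).sub (hφ _ hw hwz)
  rw [sub_sub_sub_cancel_right,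
    deriv_div_sub_moebius_comp hfz had (hne _ hw hwz) (hpole _ hw) (hpole z hz)] at hsub
  simpa only [add_sub_cancel_left, sub_mul] using hsub

/-- Möbius invariance of the Aharonov coefficients: if `τ w = (a w + b)/(c w + d)`
with `a d - b c ≠ 0`, and `φ`, `ψ` are the Aharonov coefficients at `z` of `f`
and of `τ ∘ f` respectively, then `ψ n = φ n` for all `n ≥ 1`. -/
theorem aharonov_moebius_invariant (f : ℂ → ℂ) (z : ℂ) (r : ℝ) (hr : 0 < r)
    (a b c d : ℂ) (had : a * d - b * c ≠ 0)
    (φ ψ : ℕ → ℂ)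
    (hdiff : DifferentiableOn ℂ f (ball z r))
    (hd : deriv f z ≠ 0)
    (hne : ∀ w ∈ ball z r, w ≠ z → f w ≠ f z)
    (hpole : ∀ w ∈ ball z r, c * f w + d ≠ 0)
    (hφ : ∀ w ∈ ball z r, w ≠ z →
      HasSum (fun n : ℕ => φ n * (w - z) ^ n)
        (deriv f z / (f w - f z) - 1 / (w - z)))
    (hψ : ∀ w ∈ ball z r, w ≠ z →
      HasSum (fun n : ℕ => ψ n * (w - z) ^ n)
        (deriv (fun u => (a * f u + b) / (c * f u + d)) z /
            ((a * f w + b) / (c * f w + d) - (a * f z + b) / (c * f z + d)) -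
          1 / (w - z))) :
    ∀ n : ℕ, 1 ≤ n → ψ n = φ n :=
  aharonov_moebius_invariant_general f z r hr a b c d had φ ψ hdiff hne hpole hφ hψ
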